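/- Let D = (V,A) be a finite directed multigraph containing no directed cycle, and let z : A → ℝ satisfy z_a > 0 for every arc a. Then for every arc a ∈ A, z_a ≤ Σ_{i∈V} |ρ_z(i)|. -/

import Mathlib

open Finset

/-- Net inflow `ρ_z(i)` of a vector `z : A → ℝ` at a node `i` of a finite directed
multigraph given by `tail, head : A → V`. -/
def netInflow {V A : Type*} [Fintype A] [DecidableEq V]
    (tail head : A → V) (z : A → ℝ) (i : V) : ℝ :=
  (∑ a ∈ Finset.univ.filter (fun a => head a = i), z a)
    - (∑ a ∈ Finset.univ.filter (fun a => tail a = i), z a)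

/-!
Let `S` be the set of nodes reachable from `head a`. No arc leaves `S`, so summing `ρ_z` over `S`
cancels every arc inside `S` and leaves the total weight of the arcs entering `S`. Acyclicity puts
`tail a` outside `S`, so `a` is one of these arcs, and positivity gives
`z_a ≤ Σ_{i∈S} ρ_z(i) ≤ Σ_{i∈V} |ρ_z(i)|`.
-/

lemma exists_segment_injective_of_finite {α : Type*} [Finite α] (f : ℕ → α) :
    ∃ n k : ℕ, f (n + k + 1) = f n ∧
      ∀ i j, i ≤ k → j ≤ k → f (n + i) = f (n + j) → i = j := by
  classical
  have hrep : ∃ m, ∃ n < m, f n = f m := by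
    obtain ⟨x, y, hxy, hf⟩ := Finite.exists_ne_map_eq_of_infinite f
    rcases hxy.lt_or_gt with h | h
    exacts [⟨y, x, h, hf⟩, ⟨x, y, h, hf.symm⟩]
  obtain ⟨n, hnm, hfn⟩ := Nat.find_spec hrep
  refine ⟨n, Nat.find hrep - n - 1, ?_, fun i j hi hj hij => ?_⟩
  · rw [show n + (Nat.find hrep - n - 1) + 1 = Nat.find hrep by omega, hfn]
  by_contra hne
  rcases Nat.lt_or_gt_of_ne hne with h | h
  · exact Nat.find_min hrep (show n + j < Nat.find hrep by omega) ⟨n + i, by omega, hij⟩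
  · exact Nat.find_min hrep (show n + i < Nat.find hrep by omega) ⟨n + j, by omega, hij.symm⟩

section Cycles

variable {V A : Type*} (tail head : A → V)

def HasCycle : Prop :=
  ∃ k : ℕ, ∃ c : Fin (k + 1) → A,
    Function.Injective (fun i => tail (c i)) ∧ ∀ i : Fin (k + 1), head (c i) = tail (c (i + 1))

def ArcRel (u v : V) : Prop :=
  ∃ b : A, tail b = u ∧ head b = v

variable {tail head}

lemma hasCycle_of_walk [Finite V] (e : ℕ → A) (he : ∀ n, head (e n) = tail (e (n + 1))) :
    HasCycle tail head := by
  obtain ⟨n, k, hrep, hinj⟩ := exists_segment_injective_of_finite (fun m => tail (e m))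
  refine ⟨k, fun i => e (n + i),
    fun i j hij => Fin.ext (hinj i j (Fin.is_le i) (Fin.is_le j) hij), fun i => ?_⟩
  change head (e (n + i)) = tail (e (n + (i + 1 : Fin (k + 1))))
  rw [he, Fin.val_add_one]
  split_ifs with hi
  · subst hi
    simpa using hrep
  · rfl

lemma exists_walk_of_forall_exists_arc {T : Set V} (hT : T.Nonempty)
    (h : ∀ v ∈ T, ∃ b, tail b = v ∧ head b ∈ T) :
    ∃ e : ℕ → A, ∀ n, head (e n) = tail (e (n + 1)) := by
  choose g hg_tail hg_head using h
  obtain ⟨u, hu⟩ := hT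
  let next : T → T := fun v => ⟨head (g v v.2), hg_head v v.2⟩
  exact ⟨fun n => g _ (next^[n] ⟨u, hu⟩).2, fun n => by
    rw [hg_tail, Function.iterate_succ_apply']⟩

lemma hasCycle_of_transGen [Finite V] {u : V} (h : Relation.TransGen (ArcRel tail head) u u) :
    HasCycle tail head := by
  obtain ⟨e, he⟩ := exists_walk_of_forall_exists_arc
    (T := {v | Relation.TransGen (ArcRel tail head) v u}) ⟨u, h⟩ fun v hv => by
      obtain ⟨w, ⟨b, rfl, rfl⟩, hw⟩ := Relation.TransGen.head'_iff.mp hv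
      exact ⟨b, rfl, Relation.TransGen.trans_right hw h⟩
  exact hasCycle_of_walk e he

end Cycles

section NetInflow

variable {V A : Type*} [Fintype A] [DecidableEq V] (tail head : A → V) (z : A → ℝ)

lemma sum_netInflow (S : Finset V) :
    ∑ i ∈ S, netInflow tail head z i =
      (∑ b ∈ univ.filter (fun b => head b ∈ S), z b) -
        ∑ b ∈ univ.filter (fun b => tail b ∈ S), z b := by
  simp only [netInflow, sum_sub_distrib, sum_fiberwise_eq_sum_filter]

variable {tail head z}

lemma le_sum_netInflow_of_outClosed (hz : ∀ b, 0 ≤ z b) {S : Finset V}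
    (hS : ∀ b, tail b ∈ S → head b ∈ S) {a : A} (ha_head : head a ∈ S)
    (ha_tail : tail a ∉ S) :
    z a ≤ ∑ i ∈ S, netInflow tail head z i := by
  classical
  have hsub : univ.filter (fun b => tail b ∈ S) ⊆ univ.filter (fun b => head b ∈ S) := by
    intro b
    simpa using hS b
  rw [sum_netInflow, ← sum_sdiff_eq_sub hsub]
  exact single_le_sum (fun b _ => hz b) (by simp [ha_head, ha_tail])

end NetInflow

/-- if a finite directed multigraph `D = (V,A)` contains no directed cycle
(no cyclic sequence of arcs with pairwise distinct tails, each arc's head being the next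
arc's tail) and `z : A → ℝ` is positive on every arc, then `z_a ≤ Σ_{i∈V} |ρ_z(i)|` for
every arc `a`. -/
theorem stmt_7 {V A : Type*} [Fintype V] [Fintype A] [DecidableEq V]
    (tail head : A → V) (z : A → ℝ) (hpos : ∀ a, 0 < z a)
    (hacyc : ¬ ∃ k : ℕ, ∃ c : Fin (k + 1) → A,
      Function.Injective (fun i => tail (c i)) ∧
      ∀ i : Fin (k + 1), head (c i) = tail (c (i + 1)))
    (a : A) :
    z a ≤ ∑ i : V, |netInflow tail head z i| := by
  classical
  let S := univ.filter (Relation.ReflTransGen (ArcRel tail head) (head a))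
  have hS : ∀ b, tail b ∈ S → head b ∈ S := by
    simpa [S] using fun b hb => hb.tail ⟨b, rfl, rfl⟩
  have ha_head : head a ∈ S := mem_filter.mpr ⟨mem_univ _, .refl⟩
  have ha_tail : tail a ∉ S := fun h =>
    hacyc (hasCycle_of_transGen (.tail' (mem_filter.mp h).2 ⟨a, rfl, rfl⟩))
  calc z a ≤ ∑ i ∈ S, netInflow tail head z i :=
        le_sum_netInflow_of_outClosed (fun b => (hpos b).le) hS ha_head ha_tail
    _ ≤ |∑ i ∈ S, netInflow tail head z i| := le_abs_self _
    _ ≤ ∑ i ∈ S, |netInflow tail head z i| := abs_sum_le_sum_abs _ _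
    _ ≤ ∑ i : V, |netInflow tail head z i| := sum_le_univ_sum_of_nonneg fun _ => abs_nonneg _
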